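/- There is no 1-form α on the 2-torus T² = ℝ²/ℤ² such that for every t ∈ ℝ/ℤ, the rotation r_t in the first coordinate satisfies r_t*α − α = π i · t · dθ₂ modulo exact 1-forms with integral periods. More precisely, there is no α ∈ Ω¹(T²;ℂ) with π i (t · dθ₂) = r_t*α − α + β_t for all t, where each β_t is a closed 1-form all of whose periods lie in 2πi ℤ. -/
import Mathlib


open Complex intervalIntegral

/-- There is no 1-form `α = a₁ dθ₁ + a₂ dθ₂` on
`T² = ℝ²/ℤ²` (smooth doubly periodic complex coefficients) such that for every
`t ∈ ℝ/ℤ` the rotation `r_t : (θ₁,θ₂) ↦ (θ₁+t,θ₂)` satisfies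
`π i t·dθ₂ = r_t^*α − α + β_t`, where `β_t = b₁ dθ₁ + b₂ dθ₂` is a closed
1-form all of whose periods lie in `2πi ℤ`. -/
theorem no_equivariant_primitive_for_poincare :
    ¬ ∃ a₁ a₂ : ℝ × ℝ → ℂ,
        ContDiff ℝ (⊤ : ℕ∞) a₁ ∧ ContDiff ℝ (⊤ : ℕ∞) a₂ ∧
        (∀ p : ℝ × ℝ, a₁ (p.1 + 1, p.2) = a₁ p ∧ a₁ (p.1, p.2 + 1) = a₁ p) ∧
        (∀ p : ℝ × ℝ, a₂ (p.1 + 1, p.2) = a₂ p ∧ a₂ (p.1, p.2 + 1) = a₂ p) ∧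
        ∀ t : ℝ, ∃ b₁ b₂ : ℝ × ℝ → ℂ,
          ContDiff ℝ (⊤ : ℕ∞) b₁ ∧ ContDiff ℝ (⊤ : ℕ∞) b₂ ∧
          (∀ p : ℝ × ℝ, b₁ (p.1 + 1, p.2) = b₁ p ∧ b₁ (p.1, p.2 + 1) = b₁ p) ∧
          (∀ p : ℝ × ℝ, b₂ (p.1 + 1, p.2) = b₂ p ∧ b₂ (p.1, p.2 + 1) = b₂ p) ∧
          -- β_t is closed: ∂₂ b₁ = ∂₁ b₂
          (∀ p : ℝ × ℝ, fderiv ℝ b₁ p (0, 1) = fderiv ℝ b₂ p (1, 0)) ∧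
          -- periods of β_t over the two standard cycles lie in 2πi ℤ
          (∃ n : ℤ, (∫ s in (0:ℝ)..1, b₁ (s, 0)) = 2 * Real.pi * I * n) ∧
          (∃ m : ℤ, (∫ s in (0:ℝ)..1, b₂ (0, s)) = 2 * Real.pi * I * m) ∧
          -- the identity  π i t·dθ₂ = r_t^*α − α + β_t  componentwise
          (∀ p : ℝ × ℝ, (0 : ℂ) = (a₁ (p.1 + t, p.2) - a₁ p) + b₁ p) ∧
          (∀ p : ℝ × ℝ,
            (Real.pi : ℂ) * I * t = (a₂ (p.1 + t, p.2) - a₂ p) + b₂ p) := by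
  rintro ⟨a₁, a₂, -, -, -, ha₂, h⟩
  obtain ⟨b₁, b₂, -, -, -, -, -, -, ⟨m, hm⟩, -, h₂⟩ := h 1
  have hb : ∀ s : ℝ, b₂ (0, s) = Real.pi * I := by
    intro s
    have h1 := h₂ (0, s)
    have h2 := (ha₂ (0, s)).1
    push_cast at h1
    linear_combination -h1 - h2
  have hint : (∫ s in (0:ℝ)..1, b₂ (0, s)) = Real.pi * I := by
    rw [intervalIntegral.integral_congr (g := fun _ => (Real.pi : ℂ) * I)
      (fun s _ => hb s)]
    simp
  rw [hint] at hm
  have hπ : (Real.pi : ℂ) ≠ 0 := by exact_mod_cast Real.pi_ne_zero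
  have hI : (I : ℂ) ≠ 0 := I_ne_zero
  have h3 : (Real.pi : ℂ) * I * 1 = (Real.pi : ℂ) * I * (2 * m) := by
    linear_combination hm
  have h4 : (1 : ℂ) = 2 * m := mul_left_cancel₀ (mul_ne_zero hπ hI) h3
  have h5 : (1 : ℤ) = 2 * m := by exact_mod_cast h4
  omega
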